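/- Let x : [0,τ] → ℝⁿ be the state of an agent satisfying x'(t) = u(t) + d(t) with ‖u(t)‖ ≤ u_max, ‖d(t)‖ ≤ d_max, and u_max > d_max, and let p : [0,τ] → ℝⁿ be a target with ‖p'(t)‖ ≤ u_P. If dist(x(0), p(0)) + u_P·τ ≤ (u_max − d_max)·τ, then there exists an admissible control such that x(τ) = p(τ) is achievable in the worst case; formally: for any measurable d with ‖d(t)‖ ≤ d_max and any p with ‖p'(t)‖ ≤ u_P, the control u(t) = (u_max)·(p(t) − x(t))/‖p(t) − x(t)‖ (when x(t) ≠ p(t)) makes r(t) = ‖x(t) − p(t)‖ satisfy r'(t) ≤ −(u_max − d_max − u_P) almost everywhere while r(t) > 0, hence r(t) = 0 for some t ≤ r(0)/(u_max − d_max − u_P) ≤ τ. -/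

import Mathlib

/-!
Write `w = x - p`. Under the pursuit control `u = umax • (p - x) / ‖p - x‖` the control term
contributes exactly `-umax` to the rate of change of `‖w‖`, while the disturbance and the target's
motion contribute at most `dmax + uP`. Hence `‖w‖` decreases at rate at least
`c = umax - dmax - uP > 0` as long as it is positive, and by the mean value theorem it must
vanish before time `‖w 0‖ / c`, which the feasibility condition places inside `[0, τ]`.
-/

open Set
open scoped InnerProductSpace

section InnerProductSpace

variable {E : Type*} [NormedAddCommGroup E] [InnerProductSpace ℝ E]

theorem HasDerivAt.norm {f : ℝ → E} {v : E} {t : ℝ} (hf : HasDerivAt f v t) (h0 : f t ≠ 0) :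
    HasDerivAt (fun s => ‖f s‖) (⟪f t, v⟫_ℝ / ‖f t‖) t := by
  have hsqrt := hf.norm_sq.sqrt (pow_ne_zero 2 (norm_ne_zero_iff.2 h0))
  simp only [Real.sqrt_sq (norm_nonneg _)] at hsqrt
  rwa [mul_div_mul_left _ _ two_ne_zero] at hsqrt

theorem real_inner_neg_smul_add_div_norm_le {w e : E} (hw : w ≠ 0) {a b : ℝ} (he : ‖e‖ ≤ b) :
    ⟪w, -(a / ‖w‖) • w + e⟫_ℝ / ‖w‖ ≤ -(a - b) := by
  have hw' : 0 < ‖w‖ := norm_pos_iff.2 hw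
  have he' : ⟪w, e⟫_ℝ ≤ ‖w‖ * b :=
    (real_inner_le_norm w e).trans (mul_le_mul_of_nonneg_left he hw'.le)
  rw [div_le_iff₀ hw', inner_add_right, real_inner_smul_right, real_inner_self_eq_norm_sq]
  field_simp
  linarith

end InnerProductSpace

theorem exists_mem_Icc_eq_zero_of_hasDerivAt_le_neg {f f' : ℝ → ℝ} {c : ℝ} (hc : 0 < c)
    (hnn : ∀ t, 0 ≤ f t)
    (hf : ∀ t ∈ Icc 0 (f 0 / c), 0 < f t → HasDerivAt f (f' t) t ∧ f' t ≤ -c) :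
    ∃ t ∈ Icc 0 (f 0 / c), f t = 0 := by
  set T := f 0 / c
  have hT : 0 ≤ T := div_nonneg (hnn 0) hc.le
  by_contra! hne
  have hpos : ∀ t ∈ Icc 0 T, 0 < f t := fun t ht => (hnn t).lt_of_ne (hne t ht).symm
  have hderiv : ∀ t ∈ Icc 0 T, HasDerivAt f (f' t) t ∧ f' t ≤ -c :=
    fun t ht => hf t ht (hpos t ht)
  have hmvt : f T - f 0 ≤ -c * (T - 0) := by
    refine (convex_Icc 0 T).image_sub_le_mul_sub_of_deriv_le
      (fun t ht => (hderiv t ht).1.continuousAt.continuousWithinAt)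
      (fun t ht => (hderiv t (interior_subset ht)).1.differentiableAt.differentiableWithinAt)
      (fun t ht => ?_) 0 ⟨le_rfl, hT⟩ T ⟨hT, le_rfl⟩ hT
    obtain ⟨hderiv_t, hle⟩ := hderiv t (interior_subset ht)
    exact hderiv_t.deriv ▸ hle
  have hcT : c * T = f 0 := mul_div_cancel₀ _ hc.ne'
  linarith [hpos T ⟨hT, le_rfl⟩]

theorem stmt6_general (n : ℕ) (τ umax dmax uP : ℝ)
    (hnet : dmax + uP < umax)
    (x p : ℝ → EuclideanSpace ℝ (Fin n))
    (u d : ℝ → EuclideanSpace ℝ (Fin n))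
    (hdyn : ∀ t ∈ Set.Icc (0:ℝ) τ, HasDerivAt x (u t + d t) t)
    (hdb : ∀ t ∈ Set.Icc (0:ℝ) τ, ‖d t‖ ≤ dmax)
    (hp : ∀ t ∈ Set.Icc (0:ℝ) τ, HasDerivAt p (deriv p t) t ∧ ‖deriv p t‖ ≤ uP)
    (hctrl : ∀ t ∈ Set.Icc (0:ℝ) τ, x t ≠ p t →
      u t = (umax / ‖p t - x t‖) • (p t - x t))
    (hfeas : dist (x 0) (p 0) + uP * τ ≤ (umax - dmax) * τ)
    (r : ℝ → ℝ) (hr : r = fun t => ‖x t - p t‖) :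
    (∀ t ∈ Set.Icc (0:ℝ) τ, 0 < r t →
        HasDerivAt r (deriv r t) t ∧ deriv r t ≤ -(umax - dmax - uP)) ∧
    ∃ t : ℝ, 0 ≤ t ∧ t ≤ r 0 / (umax - dmax - uP) ∧
      r 0 / (umax - dmax - uP) ≤ τ ∧ r t = 0 := by
  have hc : 0 < umax - dmax - uP := by linarith
  have hdecay : ∀ t ∈ Icc (0:ℝ) τ, 0 < r t →
      HasDerivAt r (deriv r t) t ∧ deriv r t ≤ -(umax - dmax - uP) := by
    intro t ht hpos
    subst hr
    have hw : x t - p t ≠ 0 := norm_pos_iff.1 hpos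
    have hu_t : u t = -(umax / ‖x t - p t‖) • (x t - p t) := by
      rw [hctrl t ht (sub_ne_zero.1 hw), ← neg_sub (x t) (p t), norm_neg, smul_neg, neg_smul]
    have hderiv := HasDerivAt.norm ((hdyn t ht).sub (hp t ht).1) hw
    rw [hu_t, add_sub_assoc] at hderiv
    simp only [Pi.sub_apply] at hderiv
    refine ⟨hderiv.differentiableAt.hasDerivAt, ?_⟩
    rw [hderiv.deriv, sub_sub]
    refine real_inner_neg_smul_add_div_norm_le hw ((norm_sub_le _ _).trans ?_)
    linarith [hdb t ht, (hp t ht).2]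
  have hT : r 0 / (umax - dmax - uP) ≤ τ := by
    have hr0 : r 0 = dist (x 0) (p 0) := by rw [hr, dist_eq_norm]
    rw [div_le_iff₀ hc, hr0]
    linarith
  obtain ⟨t, ⟨ht0, htT⟩, hrt⟩ := exists_mem_Icc_eq_zero_of_hasDerivAt_le_neg hc
    (fun t => hr ▸ norm_nonneg _)
    (fun t ht => hdecay t ⟨ht.1, ht.2.trans hT⟩)
  exact ⟨hdecay, t, ht0, htT, hT, hrt⟩

theorem stmt6 (n : ℕ) (τ umax dmax uP : ℝ)
    (hτ : 0 < τ) (hd : 0 ≤ dmax) (huP : 0 ≤ uP) (hnet : dmax + uP < umax)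
    (x p : ℝ → EuclideanSpace ℝ (Fin n))
    (u d : ℝ → EuclideanSpace ℝ (Fin n))
    (hdyn : ∀ t ∈ Set.Icc (0:ℝ) τ, HasDerivAt x (u t + d t) t)
    (hu : ∀ t ∈ Set.Icc (0:ℝ) τ, ‖u t‖ ≤ umax)
    (hdb : ∀ t ∈ Set.Icc (0:ℝ) τ, ‖d t‖ ≤ dmax)
    (hp : ∀ t ∈ Set.Icc (0:ℝ) τ, HasDerivAt p (deriv p t) t ∧ ‖deriv p t‖ ≤ uP)
    (hctrl : ∀ t ∈ Set.Icc (0:ℝ) τ, x t ≠ p t →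
      u t = (umax / ‖p t - x t‖) • (p t - x t))
    (hfeas : dist (x 0) (p 0) + uP * τ ≤ (umax - dmax) * τ)
    (r : ℝ → ℝ) (hr : r = fun t => ‖x t - p t‖) :
    (∀ t ∈ Set.Icc (0:ℝ) τ, 0 < r t →
        HasDerivAt r (deriv r t) t ∧ deriv r t ≤ -(umax - dmax - uP)) ∧
    ∃ t : ℝ, 0 ≤ t ∧ t ≤ r 0 / (umax - dmax - uP) ∧
      r 0 / (umax - dmax - uP) ≤ τ ∧ r t = 0 :=
  stmt6_general n τ umax dmax uP hnet x p u d hdyn hdb hp hctrl hfeas r hr
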